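/- arXiv:1505.00615 — 2 statements merged into one kernel-verified Lean document; each statement's English description precedes it below -/
import Mathlib

section
/- Let f ∈ ℂ[x_0,...,x_n] be homogeneous of degree d and suppose the hypersurface f = 0 in ℙ^n has a singular point p of multiplicity at least 3. Then for every h in J_{f,d} (the degree-d part of the Jacobian ideal of f), the polynomial f + h still defines a hypersurface singular at p. In particular, f is not tangentially smoothable. -/
open MvPolynomial

/-- The ideal `(x₀, …, x_{n-1})` in `ℂ[x₀, …, x_n]`. -/
noncomputable def idealFirst (n : ℕ) : Ideal (MvPolynomial (Fin (n + 1)) ℂ) :=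
  Ideal.span (Set.range fun i : Fin n => (X i.castSucc : MvPolynomial (Fin (n + 1)) ℂ))

/-- The point `p = (0 : ⋯ : 0 : 1)` (as an affine representative). -/
def ptLast (n : ℕ) : Fin (n + 1) → ℂ := fun i => if i = Fin.last n then 1 else 0

/-- The degree-`d` part of the Jacobian ideal of `f`. -/
def Jd (n : ℕ) (f : MvPolynomial (Fin (n + 1)) ℂ) :
    Set (MvPolynomial (Fin (n + 1)) ℂ) :=
  {h | ∃ a : Fin (n + 1) → Fin (n + 1) → ℂ,
    h = ∑ i, ∑ j, a i j • (X i * pderiv j f)}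

lemma pderiv_mem_pow {σ : Type*} [DecidableEq σ] (I : Ideal (MvPolynomial σ ℂ)) (k : σ) :
    ∀ m : ℕ, ∀ f ∈ I ^ (m + 1), pderiv k f ∈ I ^ m := by
  intro m
  induction m with
  | zero => intro f _; simp
  | succ m ih =>
    intro f hf
    rw [pow_succ] at hf
    refine Submodule.mul_induction_on hf ?_ ?_
    · intro a ha b hb
      rw [pderiv_mul]
      refine add_mem ?_ ?_
      · rw [pow_succ]
        exact Ideal.mul_mem_mul (ih a ha) hb
      · exact (I ^ (m + 1)).mul_mem_right _ ha
    · intro x y hx hy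
      rw [map_add]
      exact add_mem hx hy

/-- if the hypersurface `f = 0` has a singular point
`p = (0:⋯:0:1)` of multiplicity ≥ 3 (i.e. `f ∈ (x₀,…,x_{n-1})³`), then for
every `h ∈ J_{f,d}` the polynomial `f + h` is still singular at `p`; in
particular `f` is not tangentially smoothable. -/
theorem not_tangentially_smoothable_of_mult_ge_three (n d : ℕ) (hn : 1 ≤ n)
    (f : MvPolynomial (Fin (n + 1)) ℂ)
    (hf : f.IsHomogeneous d) (hmem : f ∈ (idealFirst n) ^ 3) :
    (∀ h ∈ Jd n f, ∀ i, eval (ptLast n) (pderiv i (f + h)) = 0) ∧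
    ¬∃ h ∈ Jd n f, ∀ x : Fin (n + 1) → ℂ, x ≠ 0 →
        ∃ i, eval x (pderiv i (f + h)) ≠ 0 := by
  have hI : ∀ g ∈ idealFirst n, eval (ptLast n) g = 0 := by
    intro g hg
    have hle : idealFirst n ≤ RingHom.ker (eval (ptLast n)) := by
      rw [idealFirst, Ideal.span_le]
      rintro _ ⟨i, rfl⟩
      simp [RingHom.mem_ker, ptLast, (Fin.castSucc_lt_last i).ne]
    exact hle hg
  have key : ∀ g ∈ (idealFirst n) ^ 2, ∀ k, eval (ptLast n) (pderiv k g) = 0 := by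
    intro g hg k
    exact hI _ (by simpa using pderiv_mem_pow (idealFirst n) k 1 g hg)
  have hf2 : f ∈ (idealFirst n) ^ 2 := Ideal.pow_le_pow_right (by norm_num) hmem
  have hmemJ : ∀ h ∈ Jd n f, h ∈ (idealFirst n) ^ 2 := by
    rintro h ⟨a, rfl⟩
    refine Ideal.sum_mem _ fun i _ => Ideal.sum_mem _ fun j _ => ?_
    rw [smul_eq_C_mul]
    exact Ideal.mul_mem_left _ _
      (Ideal.mul_mem_left _ _ (pderiv_mem_pow (idealFirst n) j 2 f hmem))
  have main : ∀ h ∈ Jd n f, ∀ i, eval (ptLast n) (pderiv i (f + h)) = 0 := by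
    intro h hh i
    rw [map_add, map_add, key f hf2 i, key h (hmemJ h hh) i, add_zero]
  refine ⟨main, ?_⟩
  rintro ⟨h, hh, hx⟩
  have hne : ptLast n ≠ 0 := by
    intro h0
    have := congrFun h0 (Fin.last n)
    simp [ptLast] at this
  obtain ⟨i, hi⟩ := hx (ptLast n) hne
  exact hi (main h hh i)
end

section
/- Let f ∈ S_{n,d} with T_f as defined. Then f is totally tangentially unstable (T_f ⊆ ℂf) if and only if the germ at f of the projectivized orbit ℙ(G·f) contains no germ of a projective linear subspace through f of positive dimension. -/
/-! A linear germ `ℙ(V)` in the orbit germ means `V ⊆ T_f`, so `T_f ⊆ ℂ f` forces `rank V ≤ 1`.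
Conversely, for a form `f` of degree `d > 0` the orbit is stable under nonzero scaling, since
`c • f` is `f` composed with the scalar matrix `c ^ (1 / d)`. Hence from
`f + t • (p • f + q • h) = (1 + t p) • (f + (t q / (1 + t p)) • h)` the whole span of `f` and
`h ∈ T_f` lies in `T_f`, and it is a plane unless `h ∈ ℂ f`. A constant `f` is fixed by `G`, so
then `T_f = 0`. -/

open MvPolynomial

/-- The action of `GL(n+1, ℂ)` on polynomials by linear coordinate change. -/
noncomputable def substGL (n : ℕ) (A : GL (Fin (n + 1)) ℂ)
    (f : MvPolynomial (Fin (n + 1)) ℂ) : MvPolynomial (Fin (n + 1)) ℂ :=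
  aeval (fun i => ∑ j, (A : Matrix (Fin (n + 1)) (Fin (n + 1)) ℂ) i j • X j) f

/-- `g ≅ f` : `g` lies in the `GL(n+1,ℂ)`-orbit of `f`. -/
def ProjEquiv (n : ℕ) (g f : MvPolynomial (Fin (n + 1)) ℂ) : Prop :=
  ∃ A : GL (Fin (n + 1)) ℂ, g = substGL n A f

open Filter Topology

lemma aeval_smul_X_monomial {R σ : Type*} [CommSemiring R] (a : R) (m : σ →₀ ℕ) (c : R) :
    aeval (fun i => a • X i : σ → MvPolynomial σ R) (monomial m c) =
      a ^ m.degree • monomial m c := by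
  rw [aeval_monomial, Finsupp.prod]
  simp only [smul_pow, Finset.prod_smul, Finset.prod_pow_eq_pow_sum]
  rw [Finsupp.degree_apply, monomial_eq, Finsupp.prod, algebraMap_eq, Algebra.mul_smul_comm]

lemma MvPolynomial.IsHomogeneous.aeval_smul_X {R σ : Type*} [CommSemiring R] (a : R) {d : ℕ}
    {f : MvPolynomial σ R} (hf : f.IsHomogeneous d) :
    MvPolynomial.aeval (fun i => a • X i : σ → MvPolynomial σ R) f = a ^ d • f := by
  conv_lhs => rw [f.as_sum]
  conv_rhs => rw [f.as_sum]
  rw [map_sum, Finset.smul_sum]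
  refine Finset.sum_congr rfl fun m hm => ?_
  rw [aeval_smul_X_monomial, ← hf (mem_support_iff.mp hm), Finsupp.degree_eq_weight_one]
  rfl

lemma exists_pos_forall_norm_lt_iff_eventually {E : Type*} [SeminormedAddCommGroup E]
    {P : E → Prop} : (∃ ε > (0 : ℝ), ∀ t : E, ‖t‖ < ε → P t) ↔ ∀ᶠ t in 𝓝 0, P t :=
  NormedAddGroup.nhds_zero_basis_norm_lt.eventually_iff.symm

section LinearAlgebra

variable {K V : Type*} [Field K] [AddCommGroup V] [Module K V] {T : Set V} {f : V}

lemma not_exists_submodule_of_forall_eq_smul (hT : ∀ h ∈ T, ∃ c : K, h = c • f) :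
    ¬∃ W : Submodule K V, f ∈ W ∧ 2 ≤ Module.rank K W ∧ ∀ v ∈ W, v ∈ T := by
  rintro ⟨W, -, hrank, hWT⟩
  have hW : W ≤ K ∙ f := fun v hv => by
    obtain ⟨c, rfl⟩ := hT v (hWT v hv)
    exact Submodule.smul_mem _ c (Submodule.mem_span_singleton_self f)
  have hrank_le : Module.rank K W ≤ 1 := (rank_submodule_le_one_iff' W).2 ⟨f, hW⟩
  exact absurd (hrank.trans hrank_le) (by norm_num)

lemma forall_eq_smul_of_not_exists_submodule (hf : f ≠ 0)
    (hT : ∀ h ∈ T, (Submodule.span K {f, h} : Set V) ⊆ T)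
    (hno : ¬∃ W : Submodule K V, f ∈ W ∧ 2 ≤ Module.rank K W ∧ ∀ v ∈ W, v ∈ T) :
    ∀ h ∈ T, ∃ c : K, h = c • f := by
  intro h hh
  by_contra! hnc
  have hind : LinearIndepOn K id {f, h} := linearIndepOn_id_pair hf fun c => (hnc c).symm
  have hfh : f ∉ ({h} : Set V) := fun hfh => hnc 1 (by rw [one_smul, hfh])
  refine hno ⟨Submodule.span K {f, h}, Submodule.subset_span (Set.mem_insert f {h}), ?_, hT h hh⟩
  rw [rank_span_set hind, Cardinal.mk_insert hfh, Cardinal.mk_singleton]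
  norm_num

end LinearAlgebra

/-- The set `T_f`. -/
def tangentDirections (n : ℕ) (f : MvPolynomial (Fin (n + 1)) ℂ) :
    Set (MvPolynomial (Fin (n + 1)) ℂ) :=
  {h | ∀ᶠ t in 𝓝 (0 : ℂ), ProjEquiv n (f + t • h) f}

section Orbit

variable {n : ℕ}

lemma substGL_mul (A B : GL (Fin (n + 1)) ℂ) (f : MvPolynomial (Fin (n + 1)) ℂ) :
    substGL n (B * A) f = substGL n A (substGL n B f) := by
  rw [substGL, substGL, substGL, ← AlgHom.comp_apply, comp_aeval]
  congr 2
  funext i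
  simp only [map_sum, map_smul, aeval_X, Units.val_mul, Matrix.mul_apply, Finset.sum_smul,
    Finset.smul_sum, smul_smul]
  exact Finset.sum_comm

lemma substGL_smul (A : GL (Fin (n + 1)) ℂ) (c : ℂ) (f : MvPolynomial (Fin (n + 1)) ℂ) :
    substGL n A (c • f) = c • substGL n A f :=
  map_smul _ c f

lemma substGL_C (A : GL (Fin (n + 1)) ℂ) (a : ℂ) : substGL n A (C a) = C a :=
  aeval_C _ a

lemma substGL_scalar {d : ℕ} {f : MvPolynomial (Fin (n + 1)) ℂ} (hf : f.IsHomogeneous d)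
    {a : ℂ} (ha : a ≠ 0) : substGL n (Units.mk0 a ha • 1) f = a ^ d • f := by
  rw [substGL, ← hf.aeval_smul_X a]
  congr 2
  funext i
  simp [Matrix.one_apply, ite_smul]

lemma ProjEquiv.smul_left {d : ℕ} (hd : d ≠ 0) {f g : MvPolynomial (Fin (n + 1)) ℂ}
    (hf : f.IsHomogeneous d) (hg : ProjEquiv n g f) {c : ℂ} (hc : c ≠ 0) :
    ProjEquiv n (c • g) f := by
  obtain ⟨A, rfl⟩ := hg
  obtain ⟨a, rfl⟩ := IsAlgClosed.exists_pow_nat_eq c (Nat.pos_of_ne_zero hd)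
  have ha : a ≠ 0 := by rintro rfl; exact hc (zero_pow hd)
  exact ⟨Units.mk0 a ha • 1 * A, by rw [substGL_mul, substGL_scalar hf ha, substGL_smul]⟩

lemma eq_zero_of_mem_tangentDirections_C {a : ℂ} {h : MvPolynomial (Fin (n + 1)) ℂ}
    (hh : h ∈ tangentDirections n (C a)) : h = 0 := by
  have hfix : ∀ᶠ t in 𝓝[≠] (0 : ℂ), t ≠ 0 ∧ C a + t • h = C a :=
    eventually_mem_nhdsWithin.and <|
      (Eventually.filter_mono nhdsWithin_le_nhds hh).mono fun t ⟨A, hA⟩ => hA.trans (substGL_C A a)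
  obtain ⟨t, ht, hfix⟩ := hfix.exists
  exact (smul_eq_zero.mp (add_eq_left.mp hfix)).resolve_left ht

lemma span_pair_subset_tangentDirections {d : ℕ} (hd : d ≠ 0)
    {f h : MvPolynomial (Fin (n + 1)) ℂ} (hf : f.IsHomogeneous d)
    (hh : h ∈ tangentDirections n f) :
    (Submodule.span ℂ {f, h} : Set (MvPolynomial (Fin (n + 1)) ℂ)) ⊆ tangentDirections n f := by
  intro v hv
  obtain ⟨p, q, rfl⟩ := Submodule.mem_span_pair.mp hv
  have hunit : ∀ᶠ t in 𝓝 (0 : ℂ), 1 + t * p ≠ 0 :=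
    (by fun_prop : Continuous fun t : ℂ => 1 + t * p).continuousAt.eventually_ne (by simp)
  have hs : Tendsto (fun t : ℂ => t * q / (1 + t * p)) (𝓝 0) (𝓝 0) := by
    have : ContinuousAt (fun t : ℂ => t * q / (1 + t * p)) 0 := by fun_prop (disch := simp)
    simpa using this.tendsto
  filter_upwards [hunit, hs.eventually hh] with t ht hline
  have hrescale : f + t • (p • f + q • h) = (1 + t * p) • (f + (t * q / (1 + t * p)) • h) := by
    rw [smul_add (1 + t * p), smul_smul (1 + t * p), mul_div_cancel₀ _ ht]
    module
  rw [hrescale]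
  exact hline.smul_left hd hf ht

end Orbit

/-- `f` is totally tangentially unstable (`T_f ⊆ ℂf`) iff the
germ at `f` of the projectivized orbit `ℙ(G·f)` contains no germ of a
projective linear subspace through `f` of positive dimension. A projective
linear subspace through `f` of positive dimension is `ℙ(V)` for a linear
subspace `V` with `f ∈ V` and `rank V ≥ 2`; its germ at `f` lies in the orbit
germ iff each line `t ↦ f + t•v` (`v ∈ V`) stays in the orbit for small `t`. -/
theorem totally_tangentially_unstable_iff_no_linear_germ (n d : ℕ)
    (f : MvPolynomial (Fin (n + 1)) ℂ) (hf : f.IsHomogeneous d) :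
    (∀ h : MvPolynomial (Fin (n + 1)) ℂ,
        (∃ ε > (0 : ℝ), ∀ t : ℂ, ‖t‖ < ε → ProjEquiv n (f + t • h) f) →
        ∃ c : ℂ, h = c • f) ↔
    ¬∃ V : Submodule ℂ (MvPolynomial (Fin (n + 1)) ℂ),
        f ∈ V ∧ 2 ≤ Module.rank ℂ V ∧
        ∀ v ∈ V, ∃ ε > (0 : ℝ), ∀ t : ℂ, ‖t‖ < ε → ProjEquiv n (f + t • v) f := by
  simp only [exists_pos_forall_norm_lt_iff_eventually]
  refine ⟨not_exists_submodule_of_forall_eq_smul, fun hno => ?_⟩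
  by_cases hconst : ∃ a, f = C a
  · obtain ⟨a, rfl⟩ := hconst
    exact fun h hh => ⟨0, by rw [eq_zero_of_mem_tangentDirections_C hh, zero_smul]⟩
  have hf0 : f ≠ 0 := fun h0 => hconst ⟨0, by rw [h0, C_0]⟩
  have hd : d ≠ 0 := by
    rintro rfl
    exact hconst ⟨_, totalDegree_eq_zero_iff_eq_C.mp (Nat.le_zero.mp hf.totalDegree_le)⟩
  exact forall_eq_smul_of_not_exists_submodule hf0
    (fun h hh => span_pair_subset_tangentDirections hd hf hh) hno
end
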